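/- arXiv:2305.00863 — 6 statements merged into one kernel-verified Lean document; each statement's English description precedes it below -/
import Mathlib

section
/- Let Γ act minimally by homeomorphisms on a Cantor space 𝔛 and let U be a nonempty clopen adapted subset. Then the translates { g·U : g ∈ Γ } form a finite partition of 𝔛 into clopen sets, in bijection with the coset space Γ/Γ_U; in particular the stabilizer Γ_U has finite index in Γ. -/
/-!
Adaptedness says exactly that `U` is a block of the action: its translates are pairwise equal or
disjoint. By minimality every orbit meets the open set `U`, so the translates cover the space;
a cover by pairwise disjoint nonempty open sets of a compact space is finite, and the
orbit-stabilizer bijection identifies the translates with `Γ ⧸ Γ_U`.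
-/

open Pointwise Set MulAction

theorem Set.PairwiseDisjoint.finite_of_isOpen_of_sUnion_eq_univ {X : Type*} [TopologicalSpace X]
    [CompactSpace X] {S : Set (Set X)} (hdisj : S.PairwiseDisjoint id)
    (hopen : ∀ V ∈ S, IsOpen V) (hne : ∀ V ∈ S, V.Nonempty) (hcover : ⋃₀ S = univ) :
    S.Finite := by
  obtain ⟨T, hTS, hTfin, hT⟩ := isCompact_univ.elim_finite_subcover_image (c := id) hopen
    (hcover.ge.trans sUnion_eq_biUnion.le)
  refine hTfin.subset fun V hV => ?_
  obtain ⟨x, hxV⟩ := hne V hV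
  obtain ⟨W, hWT, hxW⟩ := mem_iUnion₂.mp (hT (mem_univ x))
  rwa [hdisj.elim_set hV (hTS hWT) x hxV hxW]

theorem MulAction.IsBlock.smul_inter_nonempty_iff_mem_stabilizer {G X : Type*} [Group G]
    [MulAction G X] {B : Set X} (hB : IsBlock G B) (hne : B.Nonempty) {g : G} :
    (g • B ∩ B).Nonempty ↔ g ∈ stabilizer G B :=
  ⟨fun h => hB.smul_eq_of_nonempty h, fun h => by rwa [mem_stabilizer_iff.mp h, inter_self]⟩

theorem MulAction.IsBlock.finite_orbit_of_isOpen {G X : Type*} [Group G] [TopologicalSpace X]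
    [CompactSpace X] [MulAction G X] [ContinuousConstSMul G X] [IsMinimal G X] {U : Set X}
    (hB : IsBlock G U) (hUo : IsOpen U) (hne : U.Nonempty) : (orbit G U).Finite :=
  hB.pairwiseDisjoint_range_smul.finite_of_isOpen_of_sUnion_eq_univ
    (by rintro _ ⟨g, rfl⟩; exact hUo.smul g) (by rintro _ ⟨g, rfl⟩; exact hne.smul_set)
    (by rw [sUnion_range]; exact hUo.iUnion_smul G hne)

theorem translates_finite_partition_of_adapted_general
    {G X : Type*} [Group G] [TopologicalSpace X] [CompactSpace X]
    [MulAction G X] [ContinuousConstSMul G X]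
    (hmin : ∀ x : X, Dense (MulAction.orbit G x))
    (U : Set X) (hU : IsClopen U) (hUne : U.Nonempty)
    (hadapted : ∀ g : G, (g • U ∩ U).Nonempty → g • U = U) :
    {V : Set X | ∃ g : G, V = g • U}.Finite ∧
    (∀ V ∈ {V : Set X | ∃ g : G, V = g • U}, IsClopen V) ∧
    (⋃ g : G, g • U) = Set.univ ∧
    (∀ g g' : G, g • U = g' • U ∨ Disjoint (g • U) (g' • U)) ∧
    ∀ H : Subgroup G, (H : Set G) = {g : G | (g • U ∩ U).Nonempty} →
      H.index ≠ 0 ∧ Nonempty ((G ⧸ H) ≃ {V : Set X | ∃ g : G, V = g • U}) := by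
  have : IsMinimal G X := ⟨hmin⟩
  have hB : IsBlock G U := isBlock_iff_smul_eq_of_nonempty.mpr hadapted
  have htranslates : {V : Set X | ∃ g : G, V = g • U} = orbit G U :=
    ext fun _ => exists_congr fun _ => eq_comm
  have hfin : (orbit G U).Finite := hB.finite_orbit_of_isOpen hU.isOpen hUne
  refine ⟨htranslates ▸ hfin, ?_, hU.isOpen.iUnion_smul G hUne,
    hB.smul_eq_smul_or_disjoint, ?_⟩
  · rintro _ ⟨g, rfl⟩
    exact ⟨hU.isClosed.smul g, hU.isOpen.smul g⟩
  · intro H hH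
    obtain rfl : H = stabilizer G U :=
      SetLike.ext fun g =>
        (Set.ext_iff.mp hH g).trans (hB.smul_inter_nonempty_iff_mem_stabilizer hUne)
    have : Finite (orbit G U) := hfin.to_subtype
    have : Finite (G ⧸ stabilizer G U) := Finite.of_equiv _ (orbitEquivQuotientStabilizer G U)
    exact ⟨Subgroup.index_ne_zero_of_finite,
      ⟨(orbitEquivQuotientStabilizer G U).symm.trans (Equiv.setCongr htranslates.symm)⟩⟩

/-- For a minimal action of a group `Γ` by homeomorphisms on a Cantor space `𝔛` and a
nonempty clopen adapted subset `U`, the translates `{g • U}` form a finite partition of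
`𝔛` into clopen sets, in bijection with the coset space `Γ/Γ_U`; in particular the
stabilizer `Γ_U` has finite index in `Γ`. -/
theorem translates_finite_partition_of_adapted
    {G X : Type*} [Group G] [TopologicalSpace X] [CompactSpace X] [T2Space X]
    [TotallyDisconnectedSpace X] [PerfectSpace X] [TopologicalSpace.MetrizableSpace X]
    [Nonempty X] [MulAction G X] [ContinuousConstSMul G X]
    (hmin : ∀ x : X, Dense (MulAction.orbit G x))
    (U : Set X) (hU : IsClopen U) (hUne : U.Nonempty)
    (hadapted : ∀ g : G, (g • U ∩ U).Nonempty → g • U = U) :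
    {V : Set X | ∃ g : G, V = g • U}.Finite ∧
    (∀ V ∈ {V : Set X | ∃ g : G, V = g • U}, IsClopen V) ∧
    (⋃ g : G, g • U) = Set.univ ∧
    (∀ g g' : G, g • U = g' • U ∨ Disjoint (g • U) (g' • U)) ∧
    ∀ H : Subgroup G, (H : Set G) = {g : G | (g • U ∩ U).Nonempty} →
      H.index ≠ 0 ∧ Nonempty ((G ⧸ H) ≃ {V : Set X | ∃ g : G, V = g • U}) :=
  translates_finite_partition_of_adapted_general hmin U hU hUne hadapted
end

section
/- A minimal action of a group Γ by homeomorphisms on a Cantor space 𝔛 is equicontinuous (with respect to any compatible metric) if and only if the Γ-orbit of every clopen subset U ⊆ 𝔛 under the induced action on the collection CO(𝔛) of clopen subsets is finite. -/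
/-!
A clopen set `U` of a compact metric space is `δ`-saturated for some `δ > 0`, i.e.
`thickening δ U ⊆ U`, and for a fixed `δ > 0` there are only finitely many `δ`-saturated sets,
each being the `δ`-thickening of its trace on a finite `δ`-net. Equicontinuity makes all
translates of `U` saturated for one common `δ`, so the orbit of `U` is finite. Conversely, cover
the space by finitely many clopen sets of diameter `< ε`; their translates form a finite family of
clopen sets, a common `δ` saturates all of them, and this `δ` witnesses equicontinuity.
-/

open Pointwise Metric Filter Topology

section Thickening

variable {X : Type*} [MetricSpace X]

theorem IsCompact.eventually_thickening_subset_open {s t : Set X} (hs : IsCompact s)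
    (ht : IsOpen t) (hst : s ⊆ t) : ∀ᶠ δ in 𝓝[>] (0 : ℝ), thickening δ s ⊆ t := by
  obtain ⟨δ, hδ, hsub⟩ := hs.exists_thickening_subset_open ht hst
  filter_upwards [Ioo_mem_nhdsGT hδ] with δ' hδ'
  exact (thickening_mono hδ'.2.le s).trans hsub

theorem Set.Finite.exists_pos_forall_thickening_subset_self {𝒞 : Set (Set X)} (h𝒞 : 𝒞.Finite)
    (hcompact : ∀ W ∈ 𝒞, IsCompact W) (hopen : ∀ W ∈ 𝒞, IsOpen W) :
    ∃ δ > 0, ∀ W ∈ 𝒞, thickening δ W ⊆ W := by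
  have hall : ∀ᶠ δ in 𝓝[>] (0 : ℝ), ∀ W ∈ 𝒞, thickening δ W ⊆ W :=
    (eventually_all_finite h𝒞).2 fun W hW =>
      (hcompact W hW).eventually_thickening_subset_open (hopen W hW) subset_rfl
  exact ((eventually_mem_nhdsWithin (s := Set.Ioi 0)).and hall).exists

theorem finite_setOf_thickening_subset_self [CompactSpace X] {δ : ℝ} (hδ : 0 < δ) :
    {W : Set X | thickening δ W ⊆ W}.Finite := by
  obtain ⟨F, -, hF, hcover⟩ := finite_cover_balls_of_compact (isCompact_univ (X := X)) hδ
  refine (hF.finite_subsets.image (thickening δ)).subset fun W hW => ?_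
  refine ⟨W ∩ F, Set.inter_subset_right, ?_⟩
  refine ((thickening_subset_of_subset δ Set.inter_subset_left).trans hW).antisymm fun x hx => ?_
  obtain ⟨f, hfF, hxf⟩ := Set.mem_iUnion₂.1 (hcover (Set.mem_univ x))
  have hfW : f ∈ W := hW (mem_thickening_iff.2 ⟨x, hx, by rwa [dist_comm, ← mem_ball]⟩)
  exact mem_thickening_iff.2 ⟨f, ⟨hfW, hfF⟩, hxf⟩

theorem exists_finite_isClopen_cover_of_dist_lt [CompactSpace X] [TotallyDisconnectedSpace X]
    {ε : ℝ} (hε : 0 < ε) :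
    ∃ 𝒱 : Set (Set X), 𝒱.Finite ∧ (∀ V ∈ 𝒱, IsClopen V) ∧ (∀ x, ∃ V ∈ 𝒱, x ∈ V) ∧
      ∀ V ∈ 𝒱, ∀ x ∈ V, ∀ y ∈ V, dist x y < ε := by
  choose V hVclopen hxV hVball using fun x : X =>
    compact_exists_isClopen_in_isOpen (isOpen_ball (x := x)) (mem_ball_self (half_pos hε))
  obtain ⟨t, ht⟩ := (isCompact_univ (X := X)).elim_finite_subcover V
    (fun x => (hVclopen x).isOpen) fun x _ => Set.mem_iUnion.2 ⟨x, hxV x⟩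
  refine ⟨V '' t, t.finite_toSet.image V, ?_, fun x => ?_, ?_⟩
  · rintro _ ⟨c, -, rfl⟩
    exact hVclopen c
  · obtain ⟨c, hc, hx⟩ := Set.mem_iUnion₂.1 (ht (Set.mem_univ x))
    exact ⟨V c, ⟨c, hc, rfl⟩, hx⟩
  · rintro _ ⟨c, -, rfl⟩ x hx y hy
    have hxc := mem_ball.1 (hVball c hx)
    have hyc := mem_ball.1 (hVball c hy)
    linarith [dist_triangle_right x y c]

end Thickening

section Equicontinuity

variable {G X : Type*} [Group G] [MetricSpace X] [CompactSpace X] [MulAction G X]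

theorem finite_setOf_smul_eq_of_equicontinuous
    (hequi : ∀ ε : ℝ, 0 < ε → ∃ δ : ℝ, 0 < δ ∧ ∀ (g : G) (x y : X),
      dist x y < δ → dist (g • x) (g • y) < ε)
    {U : Set X} (hU : IsClopen U) : {V : Set X | ∃ g : G, V = g • U}.Finite := by
  obtain ⟨δ₀, hδ₀, hU₀⟩ := hU.isClosed.isCompact.exists_thickening_subset_open hU.isOpen subset_rfl
  obtain ⟨δ, hδ, hδ₀⟩ := hequi δ₀ hδ₀
  refine (finite_setOf_thickening_subset_self hδ).subset ?_
  rintro _ ⟨g, rfl⟩ y hy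
  obtain ⟨x, hx, hyx⟩ := mem_thickening_iff.1 hy
  rw [Set.mem_smul_set_iff_inv_smul_mem] at hx ⊢
  exact hU₀ (mem_thickening_iff.2 ⟨_, hx, hδ₀ g⁻¹ y x hyx⟩)

theorem equicontinuous_of_finite_setOf_smul_eq [TotallyDisconnectedSpace X]
    [ContinuousConstSMul G X]
    (hfin : ∀ U : Set X, IsClopen U → {V : Set X | ∃ g : G, V = g • U}.Finite) :
    ∀ ε : ℝ, 0 < ε → ∃ δ : ℝ, 0 < δ ∧ ∀ (g : G) (x y : X),
      dist x y < δ → dist (g • x) (g • y) < ε := by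
  intro ε hε
  obtain ⟨𝒱, h𝒱, hclopen, hcover, hsmall⟩ := exists_finite_isClopen_cover_of_dist_lt (X := X) hε
  set 𝒞 : Set (Set X) := {W | ∃ V ∈ 𝒱, ∃ g : G, W = g • V}
  have h𝒞clopen : ∀ W ∈ 𝒞, IsClopen W := by
    rintro _ ⟨V, hV, g, rfl⟩
    exact ⟨(hclopen V hV).isClosed.smul g, (hclopen V hV).isOpen.smul g⟩
  have h𝒞fin : 𝒞.Finite := by
    refine (h𝒱.biUnion fun V hV => hfin V (hclopen V hV)).subset ?_
    rintro _ ⟨V, hV, g, rfl⟩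
    exact Set.mem_biUnion hV ⟨g, rfl⟩
  obtain ⟨δ, hδ, hthick⟩ := h𝒞fin.exists_pos_forall_thickening_subset_self
    (fun W hW => (h𝒞clopen W hW).isClosed.isCompact) fun W hW => (h𝒞clopen W hW).isOpen
  refine ⟨δ, hδ, fun g x y hxy => ?_⟩
  obtain ⟨V, hV, hgx⟩ := hcover (g • x)
  have hx : x ∈ g⁻¹ • V := by rwa [Set.mem_smul_set_iff_inv_smul_mem, inv_inv]
  have hy : y ∈ g⁻¹ • V :=
    hthick _ ⟨V, hV, g⁻¹, rfl⟩ (mem_thickening_iff.2 ⟨x, hx, by rwa [dist_comm]⟩)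
  rw [Set.mem_smul_set_iff_inv_smul_mem, inv_inv] at hy
  exact hsmall V hV _ hgx _ hy

end Equicontinuity

theorem equicontinuous_iff_clopen_orbits_finite_general
    {G X : Type*} [Group G] [MetricSpace X] [CompactSpace X]
    [TotallyDisconnectedSpace X]
    [MulAction G X] [ContinuousConstSMul G X] :
    (∀ ε : ℝ, 0 < ε → ∃ δ : ℝ, 0 < δ ∧ ∀ (g : G) (x y : X),
        dist x y < δ → dist (g • x) (g • y) < ε) ↔
      ∀ U : Set X, IsClopen U → {V : Set X | ∃ g : G, V = g • U}.Finite :=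
  ⟨fun hequi _ hU => finite_setOf_smul_eq_of_equicontinuous hequi hU,
    equicontinuous_of_finite_setOf_smul_eq⟩

/-- A minimal action of a group `Γ` by homeomorphisms on a Cantor space `𝔛` is
equicontinuous with respect to a compatible metric if and only if the orbit of every
clopen subset under the induced action on clopen sets is finite. -/
theorem equicontinuous_iff_clopen_orbits_finite
    {G X : Type*} [Group G] [MetricSpace X] [CompactSpace X]
    [TotallyDisconnectedSpace X] [PerfectSpace X] [Nonempty X]
    [MulAction G X] [ContinuousConstSMul G X]
    (hmin : ∀ x : X, Dense (MulAction.orbit G x)) :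
    (∀ ε : ℝ, 0 < ε → ∃ δ : ℝ, 0 < δ ∧ ∀ (g : G) (x y : X),
        dist x y < δ → dist (g • x) (g • y) < ε) ↔
      ∀ U : Set X, IsClopen U → {V : Set X | ∃ g : G, V = g • U}.Finite :=
  equicontinuous_iff_clopen_orbits_finite_general
end

section
/- Let γ be an element of a group Γ, let {C_ℓ} be a descending chain of finite-index normal subgroups, and let m ≥ 1. Then the Steinitz numbers ξ(γ) = lcm{ #(⟨γ⟩/(⟨γ⟩∩C_ℓ)) : ℓ > 0 } and ξ(γ^m) = lcm{ #(⟨γ^m⟩/(⟨γ^m⟩∩C_ℓ)) : ℓ > 0 } are asymptotically equivalent; in fact there is an integer n_∞ ≤ m with n_∞ · ξ(γ^m) = ξ(γ). -/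
/-- A Steinitz number, encoded by its characteristic function on the primes. -/
abbrev SteinitzNum := Nat.Primes → ℕ∞

/-- Asymptotic equivalence of Steinitz numbers. -/
def steinitzEquiv (χ₁ χ₂ : SteinitzNum) : Prop :=
  ∃ a a' : ℕ, 0 < a ∧ 0 < a' ∧
    ∀ p : Nat.Primes, (a.factorization p : ℕ∞) + χ₁ p = (a'.factorization p : ℕ∞) + χ₂ p

/-- The Steinitz number `lcm {f ℓ : ℓ}` of a sequence of natural numbers. -/
noncomputable def steinitzOfSeq (f : ℕ → ℕ) : SteinitzNum :=
  fun p => ⨆ ℓ : ℕ, ((f ℓ).factorization p : ℕ∞)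

/-- The Steinitz order of `γ` along a chain `{C_ℓ}`:
`ξ(γ) = lcm { #(⟨γ⟩/(⟨γ⟩ ∩ C_ℓ)) : ℓ }`. -/
noncomputable def steinitzOrder {G : Type*} [Group G] (C : ℕ → Subgroup G) (γ : G) : SteinitzNum :=
  steinitzOfSeq fun ℓ => ((C ℓ).subgroupOf (Subgroup.zpowers γ)).index

/-!
Write `M ℓ` for the order of `γ` modulo `C ℓ` (the index of `⟨γ⟩ ∩ C ℓ` in `⟨γ⟩`) and `K ℓ` for
that of `γ ^ m`. In the cyclic group `⟨γ⟩/(⟨γ⟩ ∩ C ℓ)` of order `M ℓ` the element `γ ^ m` has order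
`M ℓ / gcd(m, M ℓ)`, so `M ℓ = n ℓ * K ℓ` with `n ℓ = gcd(m, M ℓ)`. Since the chain descends,
`M ℓ ∣ M (ℓ + 1)`, so `n ℓ` is a nondecreasing sequence of divisors of `m` and is eventually
equal to some `n_∞`. The lcm of a divisibility chain only depends on a tail of it, and on such a
tail `M = n_∞ * K`.
-/

open Subgroup

lemma orderOf_eq_gcd_mul_orderOf_pow {M : Type*} [Monoid M] (x : M) (m : ℕ) :
    orderOf x = Nat.gcd m (orderOf x) * orderOf (x ^ m) := by
  rcases eq_or_ne m 0 with rfl | hm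
  · simp
  · rw [orderOf_pow' x hm, Nat.gcd_comm, Nat.mul_div_cancel' (Nat.gcd_dvd_left _ _)]

namespace Subgroup

variable {G : Type*} [Group G]

lemma relIndex_zpowers_of_normal (C : Subgroup G) [C.Normal] (δ : G) :
    C.relIndex (zpowers δ) = orderOf (δ : G ⧸ C) := by
  have h := relIndex_ker (K := zpowers δ) (QuotientGroup.mk' C)
  rwa [QuotientGroup.ker_mk', MonoidHom.map_zpowers, Nat.card_zpowers] at h

lemma relIndex_zpowers_map {H : Type*} [Group H] (f : H →* G) (C : Subgroup G) (x : H) :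
    C.relIndex (zpowers (f x)) = (C.comap f).relIndex (zpowers x) := by
  rw [relIndex_comap, MonoidHom.map_zpowers]

/-- Pull back along `zpowersHom G γ` to `ℤ`, where every subgroup is normal. -/
lemma relIndex_zpowers_eq_gcd_mul_relIndex_zpowers_pow (C : Subgroup G) (γ : G) (m : ℕ) :
    C.relIndex (zpowers γ) =
      Nat.gcd m (C.relIndex (zpowers γ)) * C.relIndex (zpowers (γ ^ m)) := by
  set f := zpowersHom G γ
  have hγ : f (Multiplicative.ofAdd 1) = γ := by simp [f]
  have hγ_index := relIndex_zpowers_map f C (Multiplicative.ofAdd 1)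
  have hγm_index := relIndex_zpowers_map f C (Multiplicative.ofAdd 1 ^ m)
  rw [hγ] at hγ_index
  rw [map_pow, hγ] at hγm_index
  rw [hγ_index, hγm_index, relIndex_zpowers_of_normal, relIndex_zpowers_of_normal, QuotientGroup.mk_pow]
  exact orderOf_eq_gcd_mul_orderOf_pow _ m

end Subgroup

lemma Nat.exists_forall_ge_eq_of_monotone {g : ℕ → ℕ} (hg : Monotone g)
    (hbdd : BddAbove (Set.range g)) : ∃ L, ∀ ℓ ≥ L, g ℓ = g L := by
  obtain ⟨L, hL⟩ := Nat.sSup_mem (Set.range_nonempty g) hbdd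
  exact ⟨L, fun ℓ hℓ => le_antisymm (hL ▸ le_csSup hbdd ⟨ℓ, rfl⟩) (hg hℓ)⟩

lemma steinitzOfSeq_add_right {f : ℕ → ℕ} (hdvd : ∀ ℓ, f ℓ ∣ f (ℓ + 1)) (hf : ∀ ℓ, f ℓ ≠ 0)
    (L : ℕ) : steinitzOfSeq (fun ℓ => f (ℓ + L)) = steinitzOfSeq f := by
  funext p
  refine Monotone.iSup_nat_add (f := fun ℓ => ((f ℓ).factorization p : ℕ∞))
    (monotone_nat_of_le_succ fun ℓ => ?_) L
  exact Nat.cast_le.mpr ((Nat.factorization_le_iff_dvd (hf ℓ) (hf (ℓ + 1))).mpr (hdvd ℓ) p)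

lemma steinitzOfSeq_const_mul {g : ℕ → ℕ} {n : ℕ} (hn : n ≠ 0) (hg : ∀ ℓ, g ℓ ≠ 0)
    (p : Nat.Primes) :
    steinitzOfSeq (fun ℓ => n * g ℓ) p = n.factorization p + steinitzOfSeq g p := by
  simp only [steinitzOfSeq, Nat.factorization_mul hn (hg _), Finsupp.add_apply, Nat.cast_add,
    ENat.add_iSup]

lemma steinitzEquiv_of_factorization_add {χ χ' : SteinitzNum} {n : ℕ} (hn : 0 < n)
    (h : ∀ p : Nat.Primes, (n.factorization p : ℕ∞) + χ' p = χ p) : steinitzEquiv χ χ' :=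
  ⟨1, n, one_pos, hn, fun p => by simpa using (h p).symm⟩

theorem steinitzOrder_pow_equiv_general {G : Type*} [Group G] (γ : G) (m : ℕ) (hm : 1 ≤ m)
    (C : ℕ → Subgroup G) (hdesc : ∀ ℓ, C (ℓ + 1) ≤ C ℓ)
    (hfin : ∀ ℓ, (C ℓ).index ≠ 0) :
    steinitzEquiv (steinitzOrder C γ) (steinitzOrder C (γ ^ m)) ∧
    ∃ n : ℕ, 1 ≤ n ∧ n ≤ m ∧ ∀ p : Nat.Primes,
      (n.factorization p : ℕ∞) + steinitzOrder C (γ ^ m) p = steinitzOrder C γ p := by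
  set M := fun ℓ => (C ℓ).relIndex (zpowers γ)
  set K := fun ℓ => (C ℓ).relIndex (zpowers (γ ^ m))
  have hM : ∀ ℓ, M ℓ ≠ 0 := fun ℓ => mt index_eq_zero_of_relIndex_eq_zero (hfin ℓ)
  have hK : ∀ ℓ, K ℓ ≠ 0 := fun ℓ => mt index_eq_zero_of_relIndex_eq_zero (hfin ℓ)
  have hMdvd : ∀ ℓ, M ℓ ∣ M (ℓ + 1) := fun ℓ => relIndex_dvd_of_le_left _ (hdesc ℓ)
  have hKdvd : ∀ ℓ, K ℓ ∣ K (ℓ + 1) := fun ℓ => relIndex_dvd_of_le_left _ (hdesc ℓ)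
  have hn_mono : Monotone fun ℓ => Nat.gcd m (M ℓ) := monotone_nat_of_le_succ fun ℓ =>
    Nat.le_of_dvd (Nat.gcd_pos_of_pos_left _ hm) (Nat.gcd_dvd_gcd_of_dvd_right _ (hMdvd ℓ))
  obtain ⟨L, hL⟩ := Nat.exists_forall_ge_eq_of_monotone hn_mono
    ⟨m, Set.forall_mem_range.mpr fun ℓ => Nat.le_of_dvd hm (Nat.gcd_dvd_left _ _)⟩
  set n := Nat.gcd m (M L)
  have hn : 0 < n := Nat.gcd_pos_of_pos_left _ hm
  have htail : ∀ ℓ, M (ℓ + L) = n * K (ℓ + L) := fun ℓ => by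
    rw [← hL (ℓ + L) (Nat.le_add_left L ℓ)]
    exact relIndex_zpowers_eq_gcd_mul_relIndex_zpowers_pow _ γ m
  have hmain : ∀ p : Nat.Primes,
      (n.factorization p : ℕ∞) + steinitzOrder C (γ ^ m) p = steinitzOrder C γ p := fun p => by
    show _ + steinitzOfSeq K p = steinitzOfSeq M p
    rw [← steinitzOfSeq_add_right hMdvd hM L,
      ← steinitzOfSeq_add_right hKdvd hK L, ← steinitzOfSeq_const_mul hn.ne' (fun ℓ => hK _)]
    simp only [htail]
  exact ⟨steinitzEquiv_of_factorization_add hn hmain,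
    n, hn, Nat.le_of_dvd hm (Nat.gcd_dvd_left _ _), hmain⟩

/-- For a descending chain `{C_ℓ}` of finite-index normal subgroups and `m ≥ 1`, the
Steinitz orders `ξ(γ)` and `ξ(γ^m)` are asymptotically equivalent; in fact there is an
integer `n_∞ ≤ m` with `n_∞ · ξ(γ^m) = ξ(γ)`. -/
theorem steinitzOrder_pow_equiv {G : Type*} [Group G] (γ : G) (m : ℕ) (hm : 1 ≤ m)
    (C : ℕ → Subgroup G) (hdesc : ∀ ℓ, C (ℓ + 1) ≤ C ℓ)
    (hfin : ∀ ℓ, (C ℓ).index ≠ 0) (hnorm : ∀ ℓ, (C ℓ).Normal) :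
    steinitzEquiv (steinitzOrder C γ) (steinitzOrder C (γ ^ m)) ∧
    ∃ n : ℕ, 1 ≤ n ∧ n ≤ m ∧ ∀ p : Nat.Primes,
      (n.factorization p : ℕ∞) + steinitzOrder C (γ ^ m) p = steinitzOrder C γ p :=
  steinitzOrder_pow_equiv_general γ m hm C hdesc hfin
end

section
/- Let Γ = ℤ² ⋊ ℤ/2ℤ where the generator σ of ℤ/2ℤ acts by swapping the two ℤ-coordinates, and fix distinct primes p, q. For ℓ ≥ 0 let Γ_ℓ = { (p^ℓ k, q^ℓ m, id) : k, m ∈ ℤ }. Then the normal core of Γ_ℓ in Γ equals C_ℓ = { ((pq)^ℓ k, (pq)^ℓ m, id) : k, m ∈ ℤ }. -/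
/-- The coordinate-swap automorphism of `ℤ²` (written multiplicatively). -/
def σswap : Multiplicative (ℤ × ℤ) ≃* Multiplicative (ℤ × ℤ) :=
  AddEquiv.toMultiplicative (AddEquiv.prodComm)

lemma σswap_sq : (σswap : MulAut (Multiplicative (ℤ × ℤ))) ^ (2 : ℤ) = 1 := by
  ext x <;> rfl

/-- The action of `ℤ/2ℤ` on `ℤ²` whose generator swaps the two coordinates
(additive version). -/
noncomputable def φswapAdd : ZMod 2 →+ Additive (MulAut (Multiplicative (ℤ × ℤ))) :=
  ZMod.lift 2 ⟨zmultiplesHom _ (Additive.ofMul (σswap : MulAut (Multiplicative (ℤ × ℤ)))),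
    by
      show (2 : ℤ) • Additive.ofMul (σswap : MulAut (Multiplicative (ℤ × ℤ))) = 0
      rw [← ofMul_zpow, σswap_sq]; rfl⟩

/-- The action of `ℤ/2ℤ` on `ℤ²` whose generator swaps the two coordinates. -/
noncomputable def φswap : Multiplicative (ZMod 2) →* MulAut (Multiplicative (ℤ × ℤ)) :=
  AddMonoidHom.toMultiplicativeLeft φswapAdd

/-- The group `Γ = ℤ² ⋊ ℤ/2ℤ`, the generator of `ℤ/2ℤ` acting by swapping
the two `ℤ`-coordinates. -/
noncomputable abbrev GammaSD := Multiplicative (ℤ × ℤ) ⋊[φswap] Multiplicative (ZMod 2)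

/-- The subgroup `{(a·k, b·m, id) : k, m ∈ ℤ}` of `Γ = ℤ² ⋊ ℤ/2ℤ`. -/
noncomputable def latticeSub (a b : ℤ) : Subgroup GammaSD :=
  Subgroup.map SemidirectProduct.inl
    (AddSubgroup.toSubgroup
      ((AddSubgroup.zmultiples a).prod (AddSubgroup.zmultiples b)))

/-!
Conjugation in `Γ` acts on the normal subgroup `ℤ²` through `Γ → ℤ/2ℤ`, so it fixes `ℤ²`
pointwise or swaps its coordinates. Hence the core of `aℤ × bℤ` is its intersection with the
swapped lattice `bℤ × aℤ`, namely `lcm(a, b)ℤ × lcm(a, b)ℤ`; for `a = p^ℓ`, `b = q^ℓ` with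
`p ≠ q` prime, that `lcm` is `(pq)^ℓ`.
-/

open SemidirectProduct

theorem SemidirectProduct.mul_inl_mul_inv {N G : Type*} [CommGroup N] [Group G]
    {φ : G →* MulAut N} (g : N ⋊[φ] G) (n : N) : g * inl n * g⁻¹ = inl (φ g.right n) := by
  ext <;> simp

lemma lcm_natCast_pow_of_coprime {m n : ℕ} (h : m.Coprime n) (k : ℕ) :
    lcm ((m : ℤ) ^ k) ((n : ℤ) ^ k) = ((m : ℤ) * n) ^ k := by
  rw [← Int.coe_lcm, ← Nat.cast_pow, ← Nat.cast_pow, Int.lcm_natCast_natCast,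
    (h.pow k k).lcm_eq_mul, mul_pow]
  norm_cast

lemma φswap_ofAdd_one : φswap (.ofAdd 1) = σswap := by
  show φswapAdd ((1 : ℤ) : ZMod 2) = _
  rw [φswapAdd, ZMod.lift_coe]
  exact one_zsmul _

lemma φswap_eq_one_or_eq_σswap (s : Multiplicative (ZMod 2)) :
    φswap s = 1 ∨ φswap s = σswap := by
  obtain h | h : s = .ofAdd 0 ∨ s = .ofAdd 1 := by revert s; decide
  · exact .inl (h ▸ map_one φswap)
  · exact .inr (h ▸ φswap_ofAdd_one)

lemma inl_mem_latticeSub {a b : ℤ} {v : Multiplicative (ℤ × ℤ)} :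
    inl v ∈ latticeSub a b ↔ a ∣ v.toAdd.1 ∧ b ∣ v.toAdd.2 := by
  rw [latticeSub, Subgroup.mem_map_iff_mem inl_injective]
  exact AddSubgroup.mem_prod.trans (and_congr Int.mem_zmultiples_iff Int.mem_zmultiples_iff)

lemma latticeSub_anti {a b c d : ℤ} (hac : a ∣ c) (hbd : b ∣ d) :
    latticeSub c d ≤ latticeSub a b := by
  rintro _ ⟨v, hv, rfl⟩
  obtain ⟨hc, hd⟩ := inl_mem_latticeSub.mp ⟨v, hv, rfl⟩
  exact inl_mem_latticeSub.mpr ⟨hac.trans hc, hbd.trans hd⟩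

lemma latticeSub_self_normal (c : ℤ) : (latticeSub c c).Normal where
  conj_mem := by
    rintro _ ⟨v, hv, rfl⟩ g
    have hmem := inl_mem_latticeSub.mp ⟨v, hv, rfl⟩
    rw [mul_inl_mul_inv, inl_mem_latticeSub]
    rcases φswap_eq_one_or_eq_σswap g.right with h | h <;> rw [h]
    exacts [hmem, hmem.symm]

theorem normalCore_latticeSub_eq_lcm (a b : ℤ) :
    (latticeSub a b).normalCore = latticeSub (lcm a b) (lcm a b) := by
  refine le_antisymm (fun x hx ↦ ?_) ?_
  · obtain ⟨v, hv, rfl⟩ := (latticeSub a b).normalCore_le hx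
    obtain ⟨ha₁, hb₂⟩ := inl_mem_latticeSub.mp ⟨v, hv, rfl⟩
    have hswap := hx (inr (.ofAdd 1))
    rw [mul_inl_mul_inv, right_inr, φswap_ofAdd_one, inl_mem_latticeSub] at hswap
    obtain ⟨ha₂, hb₁⟩ := hswap
    exact inl_mem_latticeSub.mpr ⟨lcm_dvd ha₁ hb₁, lcm_dvd ha₂ hb₂⟩
  · have := latticeSub_self_normal (lcm a b)
    exact Subgroup.normal_le_normalCore.mpr
      (latticeSub_anti (dvd_lcm_left a b) (dvd_lcm_right a b))

/-- For distinct primes `p, q` and `Γ_ℓ = {(p^ℓ k, q^ℓ m, id)} ⊆ ℤ² ⋊ ℤ/2ℤ`, the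
normal core of `Γ_ℓ` in `Γ` is `C_ℓ = {((pq)^ℓ k, (pq)^ℓ m, id)}`. -/
theorem normalCore_latticeSub (p q : ℕ) (hp : p.Prime) (hq : q.Prime) (hpq : p ≠ q)
    (ℓ : ℕ) :
    (latticeSub ((p : ℤ) ^ ℓ) ((q : ℤ) ^ ℓ)).normalCore =
      latticeSub (((p : ℤ) * q) ^ ℓ) (((p : ℤ) * q) ^ ℓ) := by
  rw [normalCore_latticeSub_eq_lcm,
    lcm_natCast_pow_of_coprime ((Nat.coprime_primes hp hq).mpr hpq)]
end

section
/- In the integer Heisenberg group Γ with coordinates (a,b,c) and prime p, the normal core in Γ of the subgroup Γ_ℓ = { (p^ℓ a, p^ℓ b, p^{2ℓ} c) : a,b,c ∈ ℤ } equals C_ℓ = { (p^{2ℓ} a, p^{2ℓ} b, p^{2ℓ} c) : a,b,c ∈ ℤ }. -/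
/-- The integer Heisenberg group, with coordinates `(a, b, c)`. -/
@[ext] structure Heis where
  a : ℤ
  b : ℤ
  c : ℤ

instance : Mul Heis := ⟨fun x y => ⟨x.a + y.a, x.b + y.b, x.c + y.c + x.a * y.b⟩⟩
instance : One Heis := ⟨⟨0, 0, 0⟩⟩
instance : Inv Heis := ⟨fun x => ⟨-x.a, -x.b, -x.c + x.a * x.b⟩⟩

lemma Heis.mul_def (x y : Heis) :
    x * y = ⟨x.a + y.a, x.b + y.b, x.c + y.c + x.a * y.b⟩ := rfl
lemma Heis.one_def : (1 : Heis) = ⟨0, 0, 0⟩ := rfl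
lemma Heis.inv_def (x : Heis) : x⁻¹ = ⟨-x.a, -x.b, -x.c + x.a * x.b⟩ := rfl

instance : Group Heis where
  mul_assoc x y z := by ext <;> simp [Heis.mul_def] <;> ring
  one_mul x := by ext <;> simp [Heis.mul_def, Heis.one_def]
  mul_one x := by ext <;> simp [Heis.mul_def, Heis.one_def]
  inv_mul_cancel x := by ext <;> simp [Heis.mul_def, Heis.one_def, Heis.inv_def] <;> ring

/-- The subgroup `Γ_ℓ = {(p^ℓ a, p^ℓ b, p^{2ℓ} c) : a, b, c ∈ ℤ}` of the Heisenberg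
group. -/
def heisGamma (p : ℕ) (ℓ : ℕ) : Subgroup Heis where
  carrier := {x | ∃ a b c : ℤ, x = ⟨(p : ℤ) ^ ℓ * a, (p : ℤ) ^ ℓ * b, (p : ℤ) ^ (2 * ℓ) * c⟩}
  one_mem' := ⟨0, 0, 0, by ext <;> simp [Heis.one_def]⟩
  mul_mem' := by
    rintro x y ⟨a, b, c, rfl⟩ ⟨a', b', c', rfl⟩
    exact ⟨a + a', b + b', c + c' + a * b', by ext <;> simp [Heis.mul_def] <;> ring⟩
  inv_mem' := by
    rintro x ⟨a, b, c, rfl⟩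
    exact ⟨-a, -b, -c + a * b, by ext <;> simp [Heis.inv_def] <;> ring⟩

/-- The subgroup `C_ℓ = {(p^{2ℓ} a, p^{2ℓ} b, p^{2ℓ} c) : a, b, c ∈ ℤ}` of the
Heisenberg group. -/
def heisCore (p : ℕ) (ℓ : ℕ) : Subgroup Heis where
  carrier := {x | ∃ a b c : ℤ,
    x = ⟨(p : ℤ) ^ (2 * ℓ) * a, (p : ℤ) ^ (2 * ℓ) * b, (p : ℤ) ^ (2 * ℓ) * c⟩}
  one_mem' := ⟨0, 0, 0, by ext <;> simp [Heis.one_def]⟩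
  mul_mem' := by
    rintro x y ⟨a, b, c, rfl⟩ ⟨a', b', c', rfl⟩
    exact ⟨a + a', b + b', c + c' + (p : ℤ) ^ (2 * ℓ) * (a * b'),
      by ext <;> simp [Heis.mul_def] <;> ring⟩
  inv_mem' := by
    rintro x ⟨a, b, c, rfl⟩
    exact ⟨-a, -b, -c + (p : ℤ) ^ (2 * ℓ) * (a * b),
      by ext <;> simp [Heis.inv_def] <;> ring⟩

/-!
Conjugation by `(a, b, c)` acts by `(x, y, z) ↦ (x, y, z + a y - b x)`. Hence `C_ℓ`, whose three
coordinates are all divisible by `p^{2ℓ}`, is normal, and it lies in `Γ_ℓ`. Conversely, if every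
conjugate of `(x, y, z)` lies in `Γ_ℓ`, then conjugating by `(0, 0, 0)`, `(1, 0, 0)` and
`(0, 1, 0)` shows that `p^{2ℓ}` divides `z`, `z + y` and `z - x`, so `(x, y, z) ∈ C_ℓ`.
-/

lemma Heis.mul_mul_inv (g x : Heis) :
    g * x * g⁻¹ = ⟨x.a, x.b, x.c + g.a * x.b - g.b * x.a⟩ := by
  ext <;> simp only [Heis.mul_def, Heis.inv_def] <;> ring

lemma mem_heisGamma_iff {p ℓ : ℕ} {x : Heis} :
    x ∈ heisGamma p ℓ ↔
      (p : ℤ) ^ ℓ ∣ x.a ∧ (p : ℤ) ^ ℓ ∣ x.b ∧ (p : ℤ) ^ (2 * ℓ) ∣ x.c := by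
  constructor
  · rintro ⟨a, b, c, rfl⟩
    exact ⟨dvd_mul_right _ _, dvd_mul_right _ _, dvd_mul_right _ _⟩
  · rintro ⟨⟨a, ha⟩, ⟨b, hb⟩, ⟨c, hc⟩⟩
    exact ⟨a, b, c, Heis.ext ha hb hc⟩

lemma mem_heisCore_iff {p ℓ : ℕ} {x : Heis} :
    x ∈ heisCore p ℓ ↔
      (p : ℤ) ^ (2 * ℓ) ∣ x.a ∧ (p : ℤ) ^ (2 * ℓ) ∣ x.b ∧ (p : ℤ) ^ (2 * ℓ) ∣ x.c := by
  constructor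
  · rintro ⟨a, b, c, rfl⟩
    exact ⟨dvd_mul_right _ _, dvd_mul_right _ _, dvd_mul_right _ _⟩
  · rintro ⟨⟨a, ha⟩, ⟨b, hb⟩, ⟨c, hc⟩⟩
    exact ⟨a, b, c, Heis.ext ha hb hc⟩

instance heisCore_normal (p ℓ : ℕ) : (heisCore p ℓ).Normal where
  conj_mem x hx g := by
    obtain ⟨ha, hb, hc⟩ := mem_heisCore_iff.mp hx
    rw [Heis.mul_mul_inv, mem_heisCore_iff]
    exact ⟨ha, hb, (hc.add (hb.mul_left _)).sub (ha.mul_left _)⟩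

lemma heisCore_le_heisGamma (p ℓ : ℕ) : heisCore p ℓ ≤ heisGamma p ℓ := by
  intro x hx
  obtain ⟨ha, hb, hc⟩ := mem_heisCore_iff.mp hx
  have hle : (p : ℤ) ^ ℓ ∣ (p : ℤ) ^ (2 * ℓ) := pow_dvd_pow _ (by omega)
  exact mem_heisGamma_iff.mpr ⟨hle.trans ha, hle.trans hb, hc⟩

lemma normalCore_heisGamma_le_heisCore (p ℓ : ℕ) :
    (heisGamma p ℓ).normalCore ≤ heisCore p ℓ := by
  intro x hx
  have hconj (g : Heis) : (p : ℤ) ^ (2 * ℓ) ∣ x.c + g.a * x.b - g.b * x.a := by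
    have := hx g
    rw [Heis.mul_mul_inv, mem_heisGamma_iff] at this
    exact this.2.2
  have hc : (p : ℤ) ^ (2 * ℓ) ∣ x.c := by simpa using hconj ⟨0, 0, 0⟩
  have hcb : (p : ℤ) ^ (2 * ℓ) ∣ x.c + x.b := by simpa using hconj ⟨1, 0, 0⟩
  have hca : (p : ℤ) ^ (2 * ℓ) ∣ x.c - x.a := by simpa using hconj ⟨0, 1, 0⟩
  exact mem_heisCore_iff.mpr
    ⟨(dvd_sub_right hc).mp hca, (dvd_add_right hc).mp hcb, hc⟩

theorem heisGamma_normalCore_general (p : ℕ) (ℓ : ℕ) :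
    (heisGamma p ℓ).normalCore = heisCore p ℓ :=
  le_antisymm (normalCore_heisGamma_le_heisCore p ℓ)
    (Subgroup.normal_le_normalCore.mpr (heisCore_le_heisGamma p ℓ))

/-- In the integer Heisenberg group, the normal core of
`Γ_ℓ = {(p^ℓ a, p^ℓ b, p^{2ℓ} c)}` is `C_ℓ = {(p^{2ℓ} a, p^{2ℓ} b, p^{2ℓ} c)}`. -/
theorem heisGamma_normalCore (p : ℕ) (hp : p.Prime) (ℓ : ℕ) :
    (heisGamma p ℓ).normalCore = heisCore p ℓ :=
  heisGamma_normalCore_general p ℓ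
end

section
/- Let γ be a permutation of a finite set X of cardinality n, let Y be a finite set with a surjection π : Y → X such that every fiber has exactly d elements, and let γ̃ be a permutation of Y with π ∘ γ̃ = γ ∘ π. Then for every cycle c̃ of γ̃, the length of c̃ equals α·|c| for some cycle c of γ and some integer 1 ≤ α ≤ d; consequently, every prime dividing the order of γ̃ but not the order of γ must divide one of the integers 2, …, d. -/
open Function

theorem Function.minimalPeriod_le_ncard_of_forall_iterate_mem {Y : Type*} {f : Y → Y} {y : Y}
    {s : Set Y} (hs : s.Finite) (h : ∀ n, f^[n] y ∈ s) : minimalPeriod f y ≤ s.ncard := by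
  simpa using Set.ncard_le_ncard_of_injOn _ (fun n _ => h n) iterate_injOn_Iio_minimalPeriod hs

namespace Function.Semiconj

variable {X Y : Type*} {π : Y → X} {f : Y → Y} {g : X → X}

theorem minimalPeriod_dvd (h : Semiconj π f g) (y : Y) :
    minimalPeriod g (π y) ∣ minimalPeriod f y :=
  ((isPeriodicPt_minimalPeriod f y).map h).minimalPeriod_dvd

/-- The orbit of `y` under `f^[m]`, where `m` is the period of `π y`, lies in the fibre over
`π y` and has `minimalPeriod f y / m` points. -/
theorem exists_minimalPeriod_eq_mul [Finite Y] (h : Semiconj π f g) {y : Y}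
    (hy : y ∈ periodicPts f) :
    ∃ α : ℕ, 1 ≤ α ∧ α ≤ Nat.card {z // π z = π y} ∧
      minimalPeriod f y = α * minimalPeriod g (π y) := by
  set m := minimalPeriod g (π y)
  obtain ⟨α, hα⟩ := h.minimalPeriod_dvd y
  have hpos : 0 < m * α := hα ▸ minimalPeriod_pos_of_mem_periodicPts hy
  have hperiod : minimalPeriod (f^[m]) y = α := by
    rw [minimalPeriod_iterate_eq_div_gcd' hy, hα, Nat.gcd_mul_right_left,
      Nat.mul_div_cancel_left _ (Nat.pos_of_mul_pos_right hpos)]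
  have hfiber (n : ℕ) : π ((f^[m])^[n] y) = π y := by
    rw [← iterate_mul, h.iterate_right]
    exact (isPeriodicPt_minimalPeriod g (π y)).mul_const n
  refine ⟨α, Nat.pos_of_mul_pos_left hpos, ?_, by rw [hα, mul_comm]⟩
  rw [← hperiod]
  exact minimalPeriod_le_ncard_of_forall_iterate_mem (s := {z | π z = π y}) (Set.toFinite _)
    hfiber

end Function.Semiconj

theorem Equiv.Perm.exists_dvd_minimalPeriod_of_prime_dvd_orderOf {Y : Type*} [Finite Y]
    (σ : Equiv.Perm Y) {r : ℕ} (hr : r.Prime) (hrσ : r ∣ orderOf σ) :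
    ∃ y, r ∣ minimalPeriod σ y := by
  by_contra! hcop
  obtain ⟨k, hk⟩ := hrσ
  have hk_pos : 0 < k := Nat.pos_of_mul_pos_left (hk ▸ orderOf_pos σ)
  have hσk : σ ^ k = 1 := by
    ext y
    have hy : minimalPeriod σ y ∣ r * k := hk ▸ MulAction.period_dvd_orderOf σ y
    have : IsPeriodicPt σ k y :=
      (isPeriodicPt_minimalPeriod σ y).trans_dvd
        ((Nat.coprime_comm.1 (hr.coprime_iff_not_dvd.2 (hcop y))).dvd_of_dvd_mul_left hy)
    simpa [Equiv.Perm.coe_pow] using this.eq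
  have := Nat.le_of_dvd hk_pos (hk ▸ orderOf_dvd_of_pow_eq_one hσk)
  nlinarith [hr.two_le]

theorem lifted_perm_cycle_lengths_general {X Y : Type*} [Fintype Y]
    (d : ℕ) (π : Y → X)
    (hfib : ∀ x : X, Nat.card {y : Y // π y = x} = d)
    (γ : Equiv.Perm X) (γ' : Equiv.Perm Y) (hcomm : ∀ y : Y, π (γ' y) = γ (π y)) :
    (∀ y : Y, ∃ α : ℕ, 1 ≤ α ∧ α ≤ d ∧
      Function.minimalPeriod (⇑γ') y = α * Function.minimalPeriod (⇑γ) (π y)) ∧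
    ∀ r : ℕ, r.Prime → r ∣ orderOf γ' → ¬r ∣ orderOf γ →
      ∃ j ∈ Finset.Icc 2 d, r ∣ j := by
  have lift (y : Y) := Semiconj.exists_minimalPeriod_eq_mul (f := γ') (g := γ) hcomm
    (γ'.injective.mem_periodicPts y)
  refine ⟨fun y => ?_, fun r hr hrγ' hrγ => ?_⟩
  · obtain ⟨α, hα_pos, hαd, hαeq⟩ := lift y
    exact ⟨α, hα_pos, hfib (π y) ▸ hαd, hαeq⟩
  obtain ⟨y, hy⟩ := γ'.exists_dvd_minimalPeriod_of_prime_dvd_orderOf hr hrγ'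
  obtain ⟨α, hα_pos, hαd, hαeq⟩ := lift y
  have hrm : ¬r ∣ minimalPeriod γ (π y) :=
    fun h => hrγ (h.trans (MulAction.period_dvd_orderOf γ (π y)))
  have hrα : r ∣ α := (hr.coprime_iff_not_dvd.2 hrm).dvd_of_dvd_mul_right (hαeq ▸ hy)
  exact ⟨α, Finset.mem_Icc.2 ⟨hr.two_le.trans (Nat.le_of_dvd hα_pos hrα), hfib (π y) ▸ hαd⟩, hrα⟩

/-- Let `γ` be a permutation of a finite set `X`, `π : Y → X` a surjection of finite
sets with all fibers of size `d`, and `γ̃` a permutation of `Y` with `π ∘ γ̃ = γ ∘ π`.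
Then the cycle of `γ̃` through any point has length `α · |c|` where `c` is the cycle of
`γ` through its image and `1 ≤ α ≤ d`; consequently, every prime dividing the order of
`γ̃` but not the order of `γ` divides one of the integers `2, …, d`. -/
theorem lifted_perm_cycle_lengths {X Y : Type*} [Fintype X] [Fintype Y]
    (d : ℕ) (hd : 1 ≤ d) (π : Y → X) (hπ : Function.Surjective π)
    (hfib : ∀ x : X, Nat.card {y : Y // π y = x} = d)
    (γ : Equiv.Perm X) (γ' : Equiv.Perm Y) (hcomm : ∀ y : Y, π (γ' y) = γ (π y)) :
    (∀ y : Y, ∃ α : ℕ, 1 ≤ α ∧ α ≤ d ∧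
      Function.minimalPeriod (⇑γ') y = α * Function.minimalPeriod (⇑γ) (π y)) ∧
    ∀ r : ℕ, r.Prime → r ∣ orderOf γ' → ¬r ∣ orderOf γ →
      ∃ j ∈ Finset.Icc 2 d, r ∣ j :=
  lifted_perm_cycle_lengths_general d π hfib γ γ' hcomm
end
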